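/- arXiv:0707.2363 — 3 statements merged into one kernel-verified Lean document; each statement's English description precedes it below -/
import Mathlib

section
/- Let V be a finite-dimensional vector space over a field F, A ∈ End(V), v ∈ V, and φ ∈ V* (the dual space). If the rank-one operator v⊗φ (defined by (v⊗φ)(w) = φ(w)·v) lies in the image of the map B ↦ [A,B] on End(V), then φ(A^i v) = 0 for all i ≥ 0. -/
/-- If the rank-one operator `v ⊗ φ` (i.e. `w ↦ φ(w) • v`) lies in the image of
`B ↦ [A,B]` on `End(V)`, then `φ(A^i v) = 0` for all `i ≥ 0`. -/
theorem stmt_1 (F : Type*) [Field F] (V : Type*) [AddCommGroup V] [Module F V]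
    [FiniteDimensional F V] (A : Module.End F V) (v : V) (φ : Module.Dual F V)
    (h : ∃ B : Module.End F V, φ.smulRight v = A * B - B * A) (i : ℕ) :
    φ ((A ^ i) v) = 0 := by
  obtain ⟨B, hB⟩ := h
  have h1 : A ^ i * φ.smulRight v = φ.smulRight ((A ^ i) v) := by
    ext w; simp [LinearMap.smulRight_apply, Module.End.mul_apply]
  have h2 : LinearMap.trace F V (φ.smulRight ((A ^ i) v)) = φ ((A ^ i) v) := by
    exact LinearMap.trace_eq_contract_apply F V (φ ⊗ₜ[F] ((A ^ i) v))
  have h3 : LinearMap.trace F V (A ^ i * (A * B - B * A)) = 0 := by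
    rw [mul_sub, ← mul_assoc, ← mul_assoc]
    rw [map_sub]
    rw [LinearMap.trace_mul_comm F (A ^ i * B) A]
    rw [← mul_assoc, ← pow_succ, ← pow_succ', sub_self]
  rw [← h2, ← h1, hB, h3]
end

section
/- Let A be the standard nilpotent Jordan block of size r over a field F (A e_i = e_{i-1}, A e_1 = 0). Let v ∈ F^r and φ ∈ (F^r)*. If the rank-one operator v⊗φ lies in the image of B ↦ [A,B], then there exists k with 0 ≤ k ≤ r such that v ∈ Ker(A^k) and φ ∈ Ker((A*)^{r-k}). -/
open Matrix

/-- For the standard nilpotent Jordan block `A` of size `r` (`A eⱼ = e_{j-1}`, `A e₁ = 0`,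
i.e. `A i j = 1` iff `i + 1 = j`), if the rank-one matrix `v ⊗ φ` lies in the image of
`B ↦ [A,B]`, then there is `k ≤ r` with `v ∈ Ker(A^k)` and `φ ∈ Ker((A*)^{r-k})`. -/
theorem stmt_4 (F : Type*) [Field F] (r : ℕ)
    (A : Matrix (Fin r) (Fin r) F)
    (hA : ∀ i j : Fin r, A i j = if (i : ℕ) + 1 = (j : ℕ) then 1 else 0)
    (v : Fin r → F) (φ : Fin r → F)
    (h : ∃ B : Matrix (Fin r) (Fin r) F, Matrix.vecMulVec v φ = A * B - B * A) :
    ∃ k ≤ r, (A ^ k) *ᵥ v = 0 ∧ φ ᵥ* (A ^ (r - k)) = 0 := by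
  classical
  obtain ⟨B, hB⟩ := h
  -- powers of the Jordan block
  have hpow : ∀ m : ℕ, ∀ i j : Fin r, (A ^ m) i j = if (i : ℕ) + m = (j : ℕ) then 1 else 0 := by
    intro m
    induction m with
    | zero =>
      intro i j
      simp [Matrix.one_apply, Fin.ext_iff]
    | succ m ih =>
      intro i j
      rw [pow_succ, Matrix.mul_apply]
      by_cases hlt : (i : ℕ) + m < r
      · rw [Finset.sum_eq_single (⟨(i : ℕ) + m, hlt⟩ : Fin r)]
        · rw [ih, hA]
          simp only [Fin.val_mk]
          rw [if_pos trivial, one_mul]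
          by_cases hj : (i : ℕ) + m + 1 = (j : ℕ)
          · rw [if_pos hj, if_pos (by omega)]
          · rw [if_neg hj, if_neg (by omega)]
        · intro k _ hk
          rw [ih, if_neg, zero_mul]
          intro hc
          exact hk (Fin.ext (by simp only [Fin.val_mk]; omega))
        · intro hc
          exact absurd (Finset.mem_univ _) hc
      · have h2 : ¬ ((i : ℕ) + (m + 1) = (j : ℕ)) := by
          have := j.isLt; omega
        rw [if_neg h2]
        apply Finset.sum_eq_zero
        intro k _
        rw [ih, if_neg (by have := k.isLt; omega), zero_mul]
  have hApow0 : A ^ r = 0 := by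
    ext i j
    rw [hpow]
    rw [if_neg (by have := j.isLt; omega)]
    simp
  -- trace conditions
  have htr : ∀ m : ℕ, Matrix.trace (A ^ m * Matrix.vecMulVec v φ) = 0 := by
    intro m
    rw [hB, Matrix.mul_sub, Matrix.trace_sub, ← Matrix.mul_assoc, ← pow_succ,
      ← Matrix.mul_assoc, Matrix.trace_mul_comm (A ^ m * B) A, ← Matrix.mul_assoc,
      ← pow_succ', sub_self]
  -- explicit trace formula
  have htr' : ∀ m : ℕ, (∑ i : Fin r, (∑ j : Fin r,
      (if (i : ℕ) + m = (j : ℕ) then (1 : F) else 0) * v j) * φ i) = 0 := by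
    intro m
    have := htr m
    rw [Matrix.trace] at this
    simp only [Matrix.diag, Matrix.mul_apply, Matrix.vecMulVec_apply, hpow] at this
    calc (∑ i : Fin r, (∑ j : Fin r,
          (if (i : ℕ) + m = (j : ℕ) then (1 : F) else 0) * v j) * φ i)
        = ∑ i : Fin r, ∑ j : Fin r,
          (if (i : ℕ) + m = (j : ℕ) then (1 : F) else 0) * (v j * φ i) := by
          apply Finset.sum_congr rfl
          intro i _
          rw [Finset.sum_mul]
          apply Finset.sum_congr rfl
          intro j _
          ring
      _ = 0 := this
  by_cases hv : v = 0
  · refine ⟨0, Nat.zero_le r, ?_, ?_⟩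
    · simp [hv]
    · simp only [Nat.sub_zero, hApow0]
      simp
  by_cases hφ : φ = 0
  · refine ⟨r, le_refl r, ?_, ?_⟩
    · simp [hApow0]
    · simp [hφ]
  -- supports
  have hSv : (Finset.univ.filter (fun j => v j ≠ 0)).Nonempty := by
    obtain ⟨j, hj⟩ := Function.ne_iff.mp hv
    exact ⟨j, by simpa using hj⟩
  have hSφ : (Finset.univ.filter (fun i => φ i ≠ 0)).Nonempty := by
    obtain ⟨i, hi⟩ := Function.ne_iff.mp hφ
    exact ⟨i, by simpa using hi⟩
  set t : Fin r := (Finset.univ.filter (fun j => v j ≠ 0)).max' hSv with ht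
  set s : Fin r := (Finset.univ.filter (fun i => φ i ≠ 0)).min' hSφ with hs
  have hvt : v t ≠ 0 := by
    have := (Finset.univ.filter (fun j => v j ≠ 0)).max'_mem hSv
    rw [Finset.mem_filter] at this
    exact this.2
  have hφs : φ s ≠ 0 := by
    have := (Finset.univ.filter (fun i => φ i ≠ 0)).min'_mem hSφ
    rw [Finset.mem_filter] at this
    exact this.2
  have hvle : ∀ j : Fin r, (t : ℕ) < (j : ℕ) → v j = 0 := by
    intro j hj
    by_contra hc
    have h1 : j ≤ t := Finset.le_max' _ j (by simp [hc])
    have := Fin.le_def.mp h1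
    omega
  have hφge : ∀ i : Fin r, (i : ℕ) < (s : ℕ) → φ i = 0 := by
    intro i hi
    by_contra hc
    have h1 : s ≤ i := Finset.min'_le _ i (by simp [hc])
    have := Fin.le_def.mp h1
    omega
  -- key: t < s
  have hts : (t : ℕ) < (s : ℕ) := by
    by_contra hc
    push_neg at hc
    have key := htr' ((t : ℕ) - (s : ℕ))
    rw [Finset.sum_eq_single s] at key
    · rw [Finset.sum_eq_single t] at key
      · have h1 : (s : ℕ) + ((t : ℕ) - (s : ℕ)) = (t : ℕ) := by omega
        rw [if_pos h1, one_mul] at key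
        rcases mul_eq_zero.mp key with h' | h'
        · exact hvt h'
        · exact hφs h'
      · intro j _ hj
        rw [if_neg, zero_mul]
        intro hij
        exact hj (Fin.ext (by omega))
      · intro hc'
        exact absurd (Finset.mem_univ _) hc'
    · intro i _ hi
      by_cases his : (i : ℕ) < (s : ℕ)
      · rw [hφge i his, mul_zero]
      · have hgt : (s : ℕ) < (i : ℕ) := by
          rcases lt_or_eq_of_le (not_lt.mp his) with h' | h'
          · exact h'
          · exact absurd (Fin.ext h'.symm) hi
        have hz : (∑ j : Fin r,
            (if (i : ℕ) + ((t : ℕ) - (s : ℕ)) = (j : ℕ) then (1 : F) else 0) * v j) = 0 := by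
          apply Finset.sum_eq_zero
          intro j _
          by_cases hij : (i : ℕ) + ((t : ℕ) - (s : ℕ)) = (j : ℕ)
          · rw [if_pos hij, one_mul, hvle j (by omega)]
          · rw [if_neg hij, zero_mul]
        rw [hz, zero_mul]
    · intro hc'
      exact absurd (Finset.mem_univ _) hc'
  -- conclude with k = t + 1
  refine ⟨(t : ℕ) + 1, t.isLt, ?_, ?_⟩
  · ext i
    rw [Matrix.mulVec, dotProduct]
    simp only [hpow, Pi.zero_apply]
    apply Finset.sum_eq_zero
    intro j _
    by_cases hij : (i : ℕ) + ((t : ℕ) + 1) = (j : ℕ)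
    · rw [if_pos hij, one_mul, hvle j (by omega)]
    · rw [if_neg hij, zero_mul]
  · ext j
    rw [Matrix.vecMul, dotProduct]
    simp only [hpow, Pi.zero_apply]
    apply Finset.sum_eq_zero
    intro i _
    by_cases hij : (i : ℕ) + (r - ((t : ℕ) + 1)) = (j : ℕ)
    · have hjlt := j.isLt
      rw [hφge i (by omega), zero_mul]
    · rw [if_neg hij, mul_zero]
end

section
/- Let F be a field, and let A₁ ∈ End(V₁), A₂ ∈ End(V₂) be endomorphisms of finite-dimensional F-vector spaces. Set A = A₁ ⊕ A₂ ∈ End(V₁ ⊕ V₂). If (v,φ) ∈ (V₁⊕V₂) × (V₁⊕V₂)* satisfies v⊗φ ∈ [A, End(V₁⊕V₂)], and v = v₁+v₂, φ = φ₁+φ₂ are the decompositions along the direct sum, then v₁⊗φ₁ ∈ [A₁, End(V₁)] and v₂⊗φ₂ ∈ [A₂, End(V₂)]. -/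
/-- For `A = A₁ ⊕ A₂` on `V₁ × V₂`: if `v ⊗ φ ∈ [A, End(V₁ ⊕ V₂)]`, then the
componentwise rank-one operators satisfy `vᵢ ⊗ φᵢ ∈ [Aᵢ, End(Vᵢ)]`. -/
theorem stmt_5 (F : Type*) [Field F]
    (V₁ V₂ : Type*) [AddCommGroup V₁] [Module F V₁] [AddCommGroup V₂] [Module F V₂]
    [FiniteDimensional F V₁] [FiniteDimensional F V₂]
    (A₁ : Module.End F V₁) (A₂ : Module.End F V₂)
    (v : V₁ × V₂) (φ : Module.Dual F (V₁ × V₂))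
    (h : ∃ B : Module.End F (V₁ × V₂),
      φ.smulRight v = A₁.prodMap A₂ * B - B * A₁.prodMap A₂) :
    (∃ B₁ : Module.End F V₁,
      (φ.comp (LinearMap.inl F V₁ V₂)).smulRight v.1 = A₁ * B₁ - B₁ * A₁) ∧
    (∃ B₂ : Module.End F V₂,
      (φ.comp (LinearMap.inr F V₁ V₂)).smulRight v.2 = A₂ * B₂ - B₂ * A₂) := by
  obtain ⟨B, hB⟩ := h
  have hB' := LinearMap.ext_iff.mp hB
  constructor
  · refine ⟨LinearMap.fst F V₁ V₂ ∘ₗ B ∘ₗ LinearMap.inl F V₁ V₂, ?_⟩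
    ext x
    have := congrArg Prod.fst (hB' (x, 0))
    simpa using this
  · refine ⟨LinearMap.snd F V₁ V₂ ∘ₗ B ∘ₗ LinearMap.inr F V₁ V₂, ?_⟩
    ext x
    have := congrArg Prod.snd (hB' (0, x))
    simpa using this
end
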